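/- Let G be a finite group, C a conjugacy class with chosen representative r ∈ C, p : C → G a transversal with p(c)·r·p(c)⁻¹ = c, and let D be a conjugacy class of the centralizer Z(r) with representative d₀ ∈ D. Let Irr(Z(r)) be a complete set of pairwise non-isomorphic irreducible unitary representations of Z(r). Then, as functions G × G → ℂ, (|C|·|Z(r)|/(|G|·|D|))·Σ_{c∈C} Σ_{d∈D} F^{c, p(c)·d·p(c)⁻¹} = Σ_{R∈Irr(Z(r))} (χ^R(d₀)/d_R)·P^{[C,R]}. -/

import Mathlib

/-!
Statement 16: For a conjugacy class `C` of `G` with representative `r`, transversal `p`,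
and a conjugacy class `D` of `Z(r)` with representative `d₀`:
`(|C|·|Z(r)|/(|G|·|D|))·Σ_{c∈C} Σ_{d∈D} F^{c, p(c)·d·p(c)⁻¹}
  = Σ_{R∈Irr(Z(r))} (χ^R(d₀)/d_R)·P^{[C,R]}`.
-/

open scoped Classical

noncomputable section

/-- `F^{g,h}`: the indicator function of the pair `(g,h)`. -/
def Fgh {G : Type*} (g h : G) : G × G → ℂ := fun x => if x = (g, h) then 1 else 0

/-- The conjugacy class of `r` in `G`, as a `Finset`. -/
def conjClass {G : Type*} [Group G] [Fintype G] (r : G) : Finset G :=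
  Finset.image (fun g => g * r * g⁻¹) Finset.univ

/-- The centralizer `Z(r)` of `r` in `G`, as a `Finset`. -/
def centFinset {G : Type*} [Group G] [Fintype G] (r : G) : Finset G :=
  Finset.univ.filter fun z => z * r = r * z

/-- The conjugacy class of `x` in the group `Z(r)`, as a `Finset` of `G`. -/
def conjClassIn {G : Type*} [Group G] [Fintype G] (r x : G) : Finset G :=
  (centFinset r).image fun w => w * x * w⁻¹

/-- `ρ : G → Matrix (Fin d) (Fin d) ℂ` restricts to a unitary representation of `Z(r)`. -/
def IsCentRep {G : Type*} [Group G] [Fintype G] (r : G) {d : ℕ}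
    (ρ : G → Matrix (Fin d) (Fin d) ℂ) : Prop :=
  ρ 1 = 1 ∧
  (∀ z w : G, z * r = r * z → w * r = r * w → ρ (z * w) = ρ z * ρ w) ∧
  (∀ z : G, z * r = r * z → ρ z ∈ Matrix.unitaryGroup (Fin d) ℂ)

/-- `ρ` restricts to an irreducible unitary representation of `Z(r)`. -/
def IsCentIrrep {G : Type*} [Group G] [Fintype G] (r : G) {d : ℕ}
    (ρ : G → Matrix (Fin d) (Fin d) ℂ) : Prop :=
  IsCentRep r ρ ∧
  ∀ M : Matrix (Fin d) (Fin d) ℂ,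
    (∀ z : G, z * r = r * z → M * ρ z = ρ z * M) →
    ∃ c : ℂ, M = c • (1 : Matrix (Fin d) (Fin d) ℂ)

/-- Isomorphism of two representations of the centralizer `Z(r)`. -/
def RepIsoOn {G : Type*} [Group G] [Fintype G] (r : G) {d₁ d₂ : ℕ}
    (ρ₁ : G → Matrix (Fin d₁) (Fin d₁) ℂ) (ρ₂ : G → Matrix (Fin d₂) (Fin d₂) ℂ) : Prop :=
  ∃ (U : Matrix (Fin d₁) (Fin d₂) ℂ) (V : Matrix (Fin d₂) (Fin d₁) ℂ),
    U * V = 1 ∧ V * U = 1 ∧ ∀ z : G, z * r = r * z → ρ₁ z * U = U * ρ₂ z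

/-- The trace probing operator
`P^{[C,R]} := (|C|·d_R/|G|)·Σ_{c∈C} Σ_{z∈Z(r)} conj(χ^R(z))·F^{c, p(c)·z·p(c)⁻¹}`. -/
def Ptr {G : Type*} [Group G] [Fintype G] (r : G) (p : G → G) {d : ℕ}
    (ρ : G → Matrix (Fin d) (Fin d) ℂ) : G × G → ℂ :=
  ((((conjClass r).card : ℂ) * (d : ℂ)) / (Fintype.card G : ℂ)) •
    ∑ c ∈ conjClass r, ∑ z ∈ centFinset r,
      (starRingEnd ℂ) ((ρ z).trace) • Fgh c (p c * z * (p c)⁻¹)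


/-!
Expanding the probing operators, the right-hand side becomes
`∑_c ∑_{z ∈ Z(r)} (|C|/|G|) (∑_R χ^R(d₀) conj χ^R(z)) F^{c, p(c) z p(c)⁻¹}`, so the
identity is the column orthogonality relation `∑_R χ^R(d₀) conj χ^R(z) = |Z(r)|/|D|` for
`z ∈ D` and `0` for `z ∉ D`. It is the character expansion of the indicator of `D`, which
holds because a class function orthogonal to every irreducible character vanishes: by Schur's
lemma its Fourier coefficient vanishes at every irreducible representation, hence at every
unitary representation (which splits into irreducibles), in particular at the regular
representation, where it recovers the function.
-/

open scoped Matrix ComplexConjugate ComplexStarModule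

section Centralizer

variable {G : Type*} [Group G] [Fintype G] {r : G}

theorem mem_centFinset {z : G} : z ∈ centFinset r ↔ z * r = r * z := by
  simp [centFinset]

theorem mem_centFinset_iff_mem_centralizer {z : G} :
    z ∈ centFinset r ↔ z ∈ Subgroup.centralizer {r} := by
  rw [mem_centFinset, Subgroup.mem_centralizer_singleton_iff]

theorem one_mem_centFinset : (1 : G) ∈ centFinset r :=
  mem_centFinset_iff_mem_centralizer.mpr (one_mem _)

theorem inv_mem_centFinset {z : G} (hz : z ∈ centFinset r) : z⁻¹ ∈ centFinset r :=
  mem_centFinset_iff_mem_centralizer.mpr (inv_mem (mem_centFinset_iff_mem_centralizer.mp hz))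

theorem mul_mem_centFinset {z w : G} (hz : z ∈ centFinset r) (hw : w ∈ centFinset r) :
    z * w ∈ centFinset r :=
  mem_centFinset_iff_mem_centralizer.mpr
    (mul_mem (mem_centFinset_iff_mem_centralizer.mp hz) (mem_centFinset_iff_mem_centralizer.mp hw))

theorem conj_mem_centFinset {w z : G} (hw : w ∈ centFinset r) (hz : z ∈ centFinset r) :
    w * z * w⁻¹ ∈ centFinset r :=
  mul_mem_centFinset (mul_mem_centFinset hw hz) (inv_mem_centFinset hw)

theorem sum_centFinset_mul_left {M : Type*} [AddCommMonoid M] {w : G} (hw : w ∈ centFinset r)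
    (F : G → M) : ∑ z ∈ centFinset r, F (w * z) = ∑ z ∈ centFinset r, F z :=
  Finset.sum_nbij' (w * ·) (w⁻¹ * ·) (fun _ hz => mul_mem_centFinset hw hz)
    (fun _ hz => mul_mem_centFinset (inv_mem_centFinset hw) hz) (by simp) (by simp) (by simp)

theorem sum_centFinset_conj {M : Type*} [AddCommMonoid M] {w : G} (hw : w ∈ centFinset r)
    (F : G → M) : ∑ z ∈ centFinset r, F (w * z * w⁻¹) = ∑ z ∈ centFinset r, F z :=
  Finset.sum_nbij' (fun z => w * z * w⁻¹) (fun z => w⁻¹ * z * w)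
    (fun _ hz => conj_mem_centFinset hw hz)
    (fun _ hz => by simpa using conj_mem_centFinset (inv_mem_centFinset hw) hz)
    (by simp [mul_assoc]) (by simp [mul_assoc]) (by simp)

theorem card_centFinset_ne_zero : ((centFinset r).card : ℂ) ≠ 0 := by
  exact_mod_cast (Finset.card_pos.mpr ⟨1, one_mem_centFinset⟩).ne'

theorem self_mem_conjClassIn (x : G) : x ∈ conjClassIn r x :=
  Finset.mem_image.mpr ⟨1, one_mem_centFinset, by group⟩

theorem conjClassIn_subset_centFinset {x : G} (hx : x ∈ centFinset r) :
    conjClassIn r x ⊆ centFinset r := by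
  intro z hz
  obtain ⟨w, hw, rfl⟩ := Finset.mem_image.mp hz
  exact conj_mem_centFinset hw hx

theorem conj_mem_conjClassIn_iff {x w z : G} (hw : w ∈ centFinset r) :
    w * z * w⁻¹ ∈ conjClassIn r x ↔ z ∈ conjClassIn r x := by
  simp only [conjClassIn, Finset.mem_image]
  constructor
  · rintro ⟨u, hu, hux⟩
    refine ⟨w⁻¹ * u, mul_mem_centFinset (inv_mem_centFinset hw) hu, ?_⟩
    rw [← mul_left_cancel_iff (a := w), ← mul_right_cancel_iff (a := w⁻¹), ← hux]
    group
  · rintro ⟨u, hu, rfl⟩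
    exact ⟨w * u, mul_mem_centFinset hw hu, by group⟩

end Centralizer

def IsCentClassFun {G : Type*} [Group G] [Fintype G] (r : G) (f : G → ℂ) : Prop :=
  ∀ w ∈ centFinset r, ∀ z ∈ centFinset r, f (w * z * w⁻¹) = f z

def centInner {G : Type*} [Group G] [Fintype G] (r : G) (f g : G → ℂ) : ℂ :=
  ∑ z ∈ centFinset r, f z * conj (g z)

namespace IsCentRep

variable {G : Type*} [Group G] [Fintype G] {r : G} {n : ℕ} {σ : G → Matrix (Fin n) (Fin n) ℂ}

theorem map_mul (hσ : IsCentRep r σ) {z w : G} (hz : z ∈ centFinset r)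
    (hw : w ∈ centFinset r) : σ (z * w) = σ z * σ w :=
  hσ.2.1 z w (mem_centFinset.mp hz) (mem_centFinset.mp hw)

theorem star_mul_self (hσ : IsCentRep r σ) {z : G} (hz : z ∈ centFinset r) :
    star (σ z) * σ z = 1 :=
  Matrix.mem_unitaryGroup_iff'.mp (hσ.2.2 z (mem_centFinset.mp hz))

theorem map_inv (hσ : IsCentRep r σ) {z : G} (hz : z ∈ centFinset r) :
    σ z⁻¹ = star (σ z) := by
  refine left_inv_eq_right_inv ?_
    (Matrix.mem_unitaryGroup_iff.mp (hσ.2.2 z (mem_centFinset.mp hz)))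
  rw [← hσ.map_mul (inv_mem_centFinset hz) hz, inv_mul_cancel, hσ.1]

theorem trace_conj (hσ : IsCentRep r σ) {w z : G} (hw : w ∈ centFinset r)
    (hz : z ∈ centFinset r) : (σ (w * z * w⁻¹)).trace = (σ z).trace := by
  rw [hσ.map_mul (mul_mem_centFinset hw hz) (inv_mem_centFinset hw), hσ.map_mul hw hz,
    Matrix.trace_mul_cycle, ← hσ.map_mul (inv_mem_centFinset hw) hw, inv_mul_cancel, hσ.1,
    one_mul]

theorem trace_eq_of_mem_conjClassIn (hσ : IsCentRep r σ) {x z : G} (hx : x ∈ centFinset r)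
    (hz : z ∈ conjClassIn r x) : (σ z).trace = (σ x).trace := by
  obtain ⟨w, hw, rfl⟩ := Finset.mem_image.mp hz
  exact hσ.trace_conj hw hx

end IsCentRep

section Schur

variable {G : Type*} [Group G] [Fintype G] {r : G} {d₁ d₂ : ℕ}
  {ρ₁ : G → Matrix (Fin d₁) (Fin d₁) ℂ} {ρ₂ : G → Matrix (Fin d₂) (Fin d₂) ℂ}

theorem IsCentRep.conjTranspose_intertwines (h₁ : IsCentRep r ρ₁) (h₂ : IsCentRep r ρ₂)
    {T : Matrix (Fin d₁) (Fin d₂) ℂ}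
    (hT : ∀ w ∈ centFinset r, ρ₁ w * T = T * ρ₂ w) :
    ∀ w ∈ centFinset r, ρ₂ w * Tᴴ = Tᴴ * ρ₁ w := by
  intro w hw
  have h := congrArg Matrix.conjTranspose (hT w⁻¹ (inv_mem_centFinset hw))
  rw [Matrix.conjTranspose_mul, Matrix.conjTranspose_mul, ← Matrix.star_eq_conjTranspose,
    ← Matrix.star_eq_conjTranspose (ρ₂ w⁻¹), h₁.map_inv hw, h₂.map_inv hw, star_star,
    star_star] at h
  exact h.symm

open scoped ComplexOrder in
theorem IsCentIrrep.eq_zero_of_intertwines (h₁ : IsCentIrrep r ρ₁) (h₂ : IsCentIrrep r ρ₂)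
    (hni : ¬ RepIsoOn r ρ₁ ρ₂) {T : Matrix (Fin d₁) (Fin d₂) ℂ}
    (hT : ∀ w ∈ centFinset r, ρ₁ w * T = T * ρ₂ w) : T = 0 := by
  have hTH := h₁.1.conjTranspose_intertwines h₂.1 hT
  obtain ⟨a, ha⟩ := h₁.2 (T * Tᴴ) fun z hz => by
    have hz := mem_centFinset.mpr hz
    rw [Matrix.mul_assoc, ← hTH z hz, ← Matrix.mul_assoc, ← hT z hz, Matrix.mul_assoc]
  obtain ⟨b, hb⟩ := h₂.2 (Tᴴ * T) fun z hz => by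
    have hz := mem_centFinset.mpr hz
    rw [Matrix.mul_assoc, ← hT z hz, ← Matrix.mul_assoc, ← hTH z hz, Matrix.mul_assoc]
  by_contra hT0
  have ha0 : a ≠ 0 := by
    rintro rfl
    rw [zero_smul, ← Matrix.conjTranspose_conjTranspose T,
      Matrix.conjTranspose_conjTranspose Tᴴ, Matrix.conjTranspose_mul_self_eq_zero,
      Matrix.conjTranspose_eq_zero] at ha
    exact hT0 ha
  have hba : b = a := by
    have h := (Matrix.mul_assoc T Tᴴ T).symm
    rw [ha, hb, Matrix.mul_smul, Matrix.smul_mul, Matrix.mul_one, Matrix.one_mul] at h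
    exact smul_left_injective ℂ hT0 h
  exact hni ⟨T, a⁻¹ • Tᴴ,
    by rw [Matrix.mul_smul, ha, smul_smul, inv_mul_cancel₀ ha0, one_smul],
    by rw [Matrix.smul_mul, hb, hba, smul_smul, inv_mul_cancel₀ ha0, one_smul],
    fun z hz => hT z (mem_centFinset.mpr hz)⟩

def intertwinerAvg (r : G) (ρ₁ : G → Matrix (Fin d₁) (Fin d₁) ℂ)
    (ρ₂ : G → Matrix (Fin d₂) (Fin d₂) ℂ) (X : Matrix (Fin d₁) (Fin d₂) ℂ) :
    Matrix (Fin d₁) (Fin d₂) ℂ :=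
  ∑ z ∈ centFinset r, ρ₁ z * X * (ρ₂ z)ᴴ

theorem intertwines_intertwinerAvg (h₁ : IsCentRep r ρ₁) (h₂ : IsCentRep r ρ₂)
    (X : Matrix (Fin d₁) (Fin d₂) ℂ) :
    ∀ w ∈ centFinset r,
      ρ₁ w * intertwinerAvg r ρ₁ ρ₂ X = intertwinerAvg r ρ₁ ρ₂ X * ρ₂ w := by
  intro w hw
  have hρ₂ : ∀ z ∈ centFinset r, (ρ₂ (w⁻¹ * z))ᴴ = (ρ₂ z)ᴴ * ρ₂ w := by
    intro z hz
    rw [h₂.map_mul (inv_mem_centFinset hw) hz, Matrix.conjTranspose_mul,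
      ← Matrix.star_eq_conjTranspose (ρ₂ w⁻¹), ← h₂.map_inv (inv_mem_centFinset hw),
      inv_inv]
  calc ρ₁ w * intertwinerAvg r ρ₁ ρ₂ X
      = ∑ z ∈ centFinset r, ρ₁ (w * z) * X * (ρ₂ (w⁻¹ * (w * z)))ᴴ := by
        rw [intertwinerAvg, Matrix.mul_sum]
        refine Finset.sum_congr rfl fun z hz => ?_
        rw [h₁.map_mul hw hz, inv_mul_cancel_left]
        simp only [Matrix.mul_assoc]
    _ = ∑ z ∈ centFinset r, ρ₁ z * X * (ρ₂ (w⁻¹ * z))ᴴ :=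
        sum_centFinset_mul_left hw fun u => ρ₁ u * X * (ρ₂ (w⁻¹ * u))ᴴ
    _ = intertwinerAvg r ρ₁ ρ₂ X * ρ₂ w := by
        rw [intertwinerAvg, Matrix.sum_mul]
        refine Finset.sum_congr rfl fun z hz => ?_
        rw [hρ₂ z hz]
        simp only [Matrix.mul_assoc]

theorem intertwinerAvg_single_apply (a : Fin d₁) (b : Fin d₂) :
    intertwinerAvg r ρ₁ ρ₂ (Matrix.single a b 1) a b
      = ∑ z ∈ centFinset r, ρ₁ z a a * conj (ρ₂ z b b) := by
  rw [intertwinerAvg, Matrix.sum_apply]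
  refine Finset.sum_congr rfl fun z _ => ?_
  simp [Matrix.mul_apply, Matrix.single_apply, ite_and]

theorem centInner_trace_eq_sum_intertwinerAvg :
    centInner r (Matrix.trace ∘ ρ₁) (Matrix.trace ∘ ρ₂)
      = ∑ a, ∑ b, intertwinerAvg r ρ₁ ρ₂ (Matrix.single a b 1) a b := by
  simp only [intertwinerAvg_single_apply, centInner, Function.comp_apply, Matrix.trace,
    Matrix.diag, map_sum, Finset.sum_mul_sum]
  rw [Finset.sum_comm]
  exact Finset.sum_congr rfl fun _ _ => Finset.sum_comm

theorem centInner_trace_eq_zero (h₁ : IsCentIrrep r ρ₁) (h₂ : IsCentIrrep r ρ₂)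
    (hni : ¬ RepIsoOn r ρ₁ ρ₂) :
    centInner r (Matrix.trace ∘ ρ₁) (Matrix.trace ∘ ρ₂) = 0 := by
  simp [centInner_trace_eq_sum_intertwinerAvg,
    h₁.eq_zero_of_intertwines h₂ hni (intertwines_intertwinerAvg h₁.1 h₂.1 _)]

theorem trace_intertwinerAvg_self (h₁ : IsCentRep r ρ₁)
    (X : Matrix (Fin d₁) (Fin d₁) ℂ) :
    (intertwinerAvg r ρ₁ ρ₁ X).trace = (centFinset r).card * X.trace := by
  rw [intertwinerAvg, Matrix.trace_sum, Finset.sum_congr rfl fun z hz => ?_, Finset.sum_const,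
    nsmul_eq_mul]
  rw [Matrix.trace_mul_cycle, ← Matrix.star_eq_conjTranspose, h₁.star_mul_self hz,
    Matrix.one_mul]

theorem centInner_trace_self (h₁ : IsCentIrrep r ρ₁) (hd : d₁ ≠ 0) :
    centInner r (Matrix.trace ∘ ρ₁) (Matrix.trace ∘ ρ₁) = (centFinset r).card := by
  have hdiag : ∀ a,
      intertwinerAvg r ρ₁ ρ₁ (Matrix.single a a 1) a a = (centFinset r).card / d₁ := by
    intro a
    obtain ⟨c, hc⟩ := h₁.2 (intertwinerAvg r ρ₁ ρ₁ (Matrix.single a a 1))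
      fun z hz => (intertwines_intertwinerAvg h₁.1 h₁.1 _ z (mem_centFinset.mpr hz)).symm
    have htr := trace_intertwinerAvg_self h₁.1 (Matrix.single a a (1 : ℂ))
    rw [hc, Matrix.trace_smul, Matrix.trace_one, Matrix.trace_single_eq_same] at htr
    rw [hc, eq_div_iff (by exact_mod_cast hd)]
    simpa [mul_comm] using htr
  have hoff : ∀ a b, a ≠ b → intertwinerAvg r ρ₁ ρ₁ (Matrix.single a b 1) a b = 0 := by
    intro a b hab
    obtain ⟨c, hc⟩ := h₁.2 (intertwinerAvg r ρ₁ ρ₁ (Matrix.single a b 1))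
      fun z hz => (intertwines_intertwinerAvg h₁.1 h₁.1 _ z (mem_centFinset.mpr hz)).symm
    simp [hc, hab]
  rw [centInner_trace_eq_sum_intertwinerAvg]
  simp only [Finset.sum_eq_single_of_mem _ (Finset.mem_univ _) fun b _ hb => hoff _ b (Ne.symm hb),
    hdiag, Finset.sum_const, Finset.card_univ, Fintype.card_fin, nsmul_eq_mul]
  field_simp

end Schur

theorem Matrix.apply_eq_zero_of_commute_diagonal {n K : Type*} [Fintype n] [DecidableEq n]
    [Field K] {M : Matrix n n K} {μ : n → K} (h : Commute M (Matrix.diagonal μ)) {x y : n}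
    (hxy : μ x ≠ μ y) : M x y = 0 := by
  have hxy' := congrFun (congrFun h.eq x) y
  rw [Matrix.mul_diagonal, Matrix.diagonal_mul] at hxy'
  have : M x y * (μ y - μ x) = 0 := by linear_combination hxy'
  exact (mul_eq_zero.mp this).resolve_right (sub_ne_zero.mpr hxy.symm)

theorem Matrix.IsHermitian.exists_eigenvalues_ne {n 𝕜 : Type*} [Fintype n] [DecidableEq n]
    [RCLike 𝕜] {A : Matrix n n 𝕜} (hA : A.IsHermitian) (h : ¬∃ c : 𝕜, A = c • 1) :
    ∃ a b, hA.eigenvalues a ≠ hA.eigenvalues b := by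
  by_contra! hμ
  rcases isEmpty_or_nonempty n with hn | ⟨⟨a⟩⟩
  · exact h ⟨0, Subsingleton.elim _ _⟩
  have hdiag : Matrix.diagonal (RCLike.ofReal ∘ hA.eigenvalues)
      = (hA.eigenvalues a : 𝕜) • (1 : Matrix n n 𝕜) := by
    ext i j
    rcases eq_or_ne i j with rfl | hij <;> simp [*, hμ i a]
  exact h ⟨_, by rw [hA.spectral_theorem, hdiag, map_smul, map_one]⟩

theorem Matrix.submatrix_mul_of_forall_not_eq_zero {n k R : Type*} [Fintype n] [Fintype k]
    [NonUnitalNonAssocSemiring R] {Q : n → Prop} [DecidablePred Q] (e : k ≃ {x // Q x})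
    (M N : Matrix n n R)
    (h : ∀ a b c, ¬ Q c → M (e a) c * N c (e b) = 0) :
    (M * N).submatrix (e ·) (e ·) = M.submatrix (e ·) (e ·) * N.submatrix (e ·) (e ·) := by
  ext a b
  simp only [Matrix.submatrix_apply, Matrix.mul_apply]
  rw [← Fintype.sum_subtype_add_sum_subtype Q,
    Fintype.sum_eq_zero (fun c : {x // ¬ Q x} => M (e a) c * N c (e b)) fun c => h a b c c.2,
    add_zero, ← e.sum_comp]

theorem Matrix.eq_zero_of_submatrix_eq_zero {n k l R : Type*} [Zero R] {Q : n → Prop}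
    {M : Matrix n n R} (hM : ∀ x y, ¬ (Q x ↔ Q y) → M x y = 0) (e₁ : k ≃ {x // Q x})
    (e₂ : l ≃ {x // ¬ Q x}) (h₁ : M.submatrix (e₁ ·) (e₁ ·) = 0)
    (h₂ : M.submatrix (e₂ ·) (e₂ ·) = 0) : M = 0 := by
  ext x y
  by_cases hx : Q x <;> by_cases hy : Q y
  · simpa using congrFun (congrFun h₁ (e₁.symm ⟨x, hx⟩)) (e₁.symm ⟨y, hy⟩)
  · exact hM x y (by tauto)
  · exact hM x y (by tauto)
  · simpa using congrFun (congrFun h₂ (e₂.symm ⟨x, hx⟩)) (e₂.symm ⟨y, hy⟩)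

theorem Matrix.trace_of_dim_eq_zero {R : Type*} [AddCommMonoid R] {n : ℕ} (hn : n = 0)
    (M : Matrix (Fin n) (Fin n) R) : M.trace = 0 := by
  subst hn
  exact Matrix.trace_fin_zero M

namespace IsCentRep

variable {G : Type*} [Group G] [Fintype G] {r : G} {n : ℕ} {σ : G → Matrix (Fin n) (Fin n) ℂ}

theorem unitary_conj (hσ : IsCentRep r σ) (U : Matrix.unitaryGroup (Fin n) ℂ) :
    IsCentRep r fun z => Unitary.conjStarAlgAut ℂ _ (star U) (σ z) := by
  refine ⟨by simp [hσ.1], fun z w hz hw => ?_, fun z hz => ?_⟩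
  · dsimp only
    rw [hσ.2.1 z w hz hw]
    exact _root_.map_mul _ _ _
  dsimp only
  rw [Unitary.conjStarAlgAut_star_apply]
  exact mul_mem (mul_mem (Unitary.star_mem U.2) (hσ.2.2 z hz)) U.2

theorem submatrix {k : ℕ} (hσ : IsCentRep r σ) {Q : Fin n → Prop} [DecidablePred Q]
    (hQ : ∀ z ∈ centFinset r, ∀ x y, ¬ (Q x ↔ Q y) → σ z x y = 0)
    (e : Fin k ≃ {x // Q x}) : IsCentRep r fun z => (σ z).submatrix (e ·) (e ·) := by
  have hinj : Function.Injective fun a => (e a : Fin n) :=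
    Subtype.val_injective.comp e.injective
  refine ⟨by simp only [hσ.1, Matrix.submatrix_one _ hinj], fun z w hz hw => ?_,
    fun z hz => ?_⟩
  · dsimp only
    rw [hσ.2.1 z w hz hw, Matrix.submatrix_mul_of_forall_not_eq_zero]
    intro a b c hc
    rw [hQ z (mem_centFinset.mpr hz) _ c (by simp [(e a).2, hc]), zero_mul]
  · dsimp only
    rw [Matrix.mem_unitaryGroup_iff', Matrix.star_eq_conjTranspose, Matrix.conjTranspose_submatrix,
      ← Matrix.submatrix_mul_of_forall_not_eq_zero, ← Matrix.star_eq_conjTranspose,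
      Matrix.mem_unitaryGroup_iff'.mp (hσ.2.2 z hz), Matrix.submatrix_one _ hinj]
    intro a b c hc
    rw [Matrix.conjTranspose_apply, hQ z (mem_centFinset.mpr hz) c _ (by simp [(e a).2, hc]),
      star_zero, zero_mul]

theorem exists_isHermitian_commutant (hσ : IsCentRep r σ) (hred : ¬ IsCentIrrep r σ) :
    ∃ A : Matrix (Fin n) (Fin n) ℂ,
      A.IsHermitian ∧ (∀ z ∈ centFinset r, Commute A (σ z)) ∧
        ¬∃ c : ℂ, A = c • 1 := by
  obtain ⟨M, hM, hMscalar⟩ : ∃ M : Matrix (Fin n) (Fin n) ℂ,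
      (∀ z ∈ centFinset r, Commute M (σ z)) ∧ ¬∃ c : ℂ, M = c • 1 := by
    simpa [IsCentIrrep, hσ, mem_centFinset, Commute, SemiconjBy] using hred
  have hMH : ∀ z ∈ centFinset r, Commute (star M) (σ z) := fun z hz =>
    (hσ.conjTranspose_intertwines hσ (fun w hw => (hM w hw).eq.symm) z hz).symm
  by_contra! hA
  obtain ⟨a, ha⟩ := hA (ℜ M) (ℜ M).2 fun z hz => by
    rw [realPart_apply_coe]
    exact ((hM z hz).add_left (hMH z hz)).smul_left _
  obtain ⟨b, hb⟩ := hA (ℑ M) (ℑ M).2 fun z hz => by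
    rw [imaginaryPart_apply_coe]
    exact (((hM z hz).sub_left (hMH z hz)).smul_left _).smul_left _
  exact hMscalar ⟨a + Complex.I * b, by
    rw [← realPart_add_I_smul_imaginaryPart M, ha, hb, smul_smul, add_smul]⟩

end IsCentRep

section Fourier

variable {G : Type*} [Group G] [Fintype G] {r : G}

def centFourier (r : G) (f : G → ℂ) {n : ℕ} (σ : G → Matrix (Fin n) (Fin n) ℂ) :
    Matrix (Fin n) (Fin n) ℂ :=
  ∑ z ∈ centFinset r, conj (f z) • σ z

variable (f : G → ℂ) {m n : ℕ} {σ : G → Matrix (Fin n) (Fin n) ℂ}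

theorem centFourier_map {F : Type*}
    [FunLike F (Matrix (Fin n) (Fin n) ℂ) (Matrix (Fin m) (Fin m) ℂ)]
    [LinearMapClass F ℂ (Matrix (Fin n) (Fin n) ℂ) (Matrix (Fin m) (Fin m) ℂ)] (φ : F) :
    centFourier r f (fun z => φ (σ z)) = φ (centFourier r f σ) := by
  simp only [centFourier, map_sum, map_smul]

theorem centFourier_submatrix (e : Fin m → Fin n) :
    centFourier r f (fun z => (σ z).submatrix e e) = (centFourier r f σ).submatrix e e := by
  ext a b
  simp [centFourier, Matrix.sum_apply]

theorem centFourier_mul_of_intertwines {τ : G → Matrix (Fin m) (Fin m) ℂ}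
    {U : Matrix (Fin n) (Fin m) ℂ} (hU : ∀ z ∈ centFinset r, σ z * U = U * τ z) :
    centFourier r f σ * U = U * centFourier r f τ := by
  simp only [centFourier, Matrix.sum_mul, Matrix.mul_sum, Matrix.smul_mul, Matrix.mul_smul]
  exact Finset.sum_congr rfl fun z hz => by rw [hU z hz]

theorem trace_centFourier :
    (centFourier r f σ).trace = conj (centInner r f (Matrix.trace ∘ σ)) := by
  simp [centFourier, centInner, Matrix.trace_sum, Matrix.trace_smul]

theorem IsCentRep.commute_centFourier (hσ : IsCentRep r σ) {f : G → ℂ}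
    (hf : IsCentClassFun r f) :
    ∀ w ∈ centFinset r, σ w * centFourier r f σ = centFourier r f σ * σ w := by
  intro w hw
  calc σ w * centFourier r f σ
      = ∑ z ∈ centFinset r, conj (f (w * z * w⁻¹)) • σ (w * z * w⁻¹ * w) := by
        rw [centFourier, Matrix.mul_sum]
        refine Finset.sum_congr rfl fun z hz => ?_
        rw [hf w hw z hz, inv_mul_cancel_right, hσ.map_mul hw hz, Matrix.mul_smul]
    _ = ∑ z ∈ centFinset r, conj (f z) • σ (z * w) :=
        sum_centFinset_conj hw fun u => conj (f u) • σ (u * w)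
    _ = centFourier r f σ * σ w := by
        rw [centFourier, Matrix.sum_mul]
        exact Finset.sum_congr rfl fun z hz => by rw [hσ.map_mul hz hw, Matrix.smul_mul]

theorem IsCentIrrep.centFourier_eq_zero (hσ : IsCentIrrep r σ) {f : G → ℂ}
    (hf : IsCentClassFun r f) (horth : centInner r f (Matrix.trace ∘ σ) = 0) :
    centFourier r f σ = 0 := by
  obtain ⟨c, hc⟩ := hσ.2 (centFourier r f σ) fun z hz =>
    (hσ.1.commute_centFourier hf z (mem_centFinset.mpr hz)).symm
  rcases Nat.eq_zero_or_pos n with rfl | hn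
  · exact Subsingleton.elim _ _
  have htr := trace_centFourier (r := r) (σ := σ) f
  rw [horth, map_zero, hc, Matrix.trace_smul, Matrix.trace_one, Fintype.card_fin, smul_eq_mul,
    mul_eq_zero] at htr
  rw [hc, htr.resolve_right (by exact_mod_cast hn.ne'), zero_smul]

/-- A reducible unitary representation has a non-scalar hermitian self-intertwiner `A`; in an
eigenbasis of `A` it is block diagonal, with blocks of smaller dimension. -/
theorem centFourier_eq_zero_of_forall_isCentIrrep
    (hirr : ∀ (m : ℕ) (τ : G → Matrix (Fin m) (Fin m) ℂ),
      IsCentIrrep r τ → centFourier r f τ = 0)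
    (n : ℕ) (σ : G → Matrix (Fin n) (Fin n) ℂ) (hσ : IsCentRep r σ) :
    centFourier r f σ = 0 := by
  induction n using Nat.strong_induction_on with
  | _ n ih =>
  by_cases hσirr : IsCentIrrep r σ
  · exact hirr n σ hσirr
  obtain ⟨A, hA, hAσ, hAscalar⟩ := hσ.exists_isHermitian_commutant hσirr
  set φ := Unitary.conjStarAlgAut ℂ (Matrix (Fin n) (Fin n) ℂ) (star hA.eigenvectorUnitary)
  have hφσ := hσ.unitary_conj hA.eigenvectorUnitary
  obtain ⟨a, b, hab⟩ := hA.exists_eigenvalues_ne hAscalar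
  set Q : Fin n → Prop := fun x => hA.eigenvalues x = hA.eigenvalues a
  have hQ : ∀ z ∈ centFinset r, ∀ x y, ¬ (Q x ↔ Q y) → φ (σ z) x y = 0 := by
    intro z hz x y hxy
    refine Matrix.apply_eq_zero_of_commute_diagonal (μ := RCLike.ofReal ∘ hA.eigenvalues) ?_
      fun h => hxy ?_
    · rw [← hA.conjStarAlgAut_star_eigenvectorUnitary]
      exact ((hAσ z hz).symm.map φ)
    · simp only [Q, Function.comp_apply, RCLike.ofReal_inj] at h ⊢
      rw [h]
  have hQc : ∀ z ∈ centFinset r, ∀ x y, ¬ (¬ Q x ↔ ¬ Q y) → φ (σ z) x y = 0 :=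
    fun z hz x y hxy => hQ z hz x y (by rwa [not_iff_not] at hxy)
  have hcardQ : Fintype.card {x // Q x} < n := by
    simpa using Fintype.card_subtype_lt (p := Q) (x := b) fun h => hab h.symm
  have hcardQc : Fintype.card {x // ¬ Q x} < n := by
    simpa using Fintype.card_subtype_lt (p := fun x => ¬ Q x) (x := a) (by simp [Q])
  let e₁ := (Fintype.equivFin {x // Q x}).symm
  let e₂ := (Fintype.equivFin {x // ¬ Q x}).symm
  have h₁ := ih _ hcardQ _ (hφσ.submatrix hQ e₁)
  have h₂ := ih _ hcardQc _ (hφσ.submatrix hQc e₂)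
  rw [centFourier_submatrix] at h₁ h₂
  have hφ : φ (centFourier r f σ) = 0 := by
    rw [← centFourier_map]
    refine Matrix.eq_zero_of_submatrix_eq_zero (fun x y hxy => ?_) e₁ e₂ h₁ h₂
    simp only [centFourier, Matrix.sum_apply, Matrix.smul_apply]
    exact Finset.sum_eq_zero fun z hz => by rw [hQ z hz x y hxy, smul_zero]
  exact (map_eq_zero_iff φ φ.injective).mp hφ

end Fourier

section Completeness

variable {G : Type*} [Group G] [Fintype G] {r : G}

theorem Finset.sum_ite_coe_equivFin_symm_eq {α M : Type*} [AddCommMonoid M] {s : Finset α}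
    {x : α} (hx : x ∈ s) (g : Fin s.card → M) :
    ∑ c, (if (s.equivFin.symm c : α) = x then g c else 0) = g (s.equivFin ⟨x, hx⟩) := by
  have hc : ∀ c, (s.equivFin.symm c : α) = x ↔ c = s.equivFin ⟨x, hx⟩ := fun c => by
    rw [← Equiv.symm_apply_eq, Subtype.ext_iff]
  classical
  simp only [hc, Finset.sum_ite_eq', Finset.mem_univ, if_true]

def centRegRep (r : G) (w : G) : Matrix (Fin (centFinset r).card) (Fin (centFinset r).card) ℂ :=
  Matrix.of fun a b =>
    if ((centFinset r).equivFin.symm a : G) = w * (centFinset r).equivFin.symm b then 1 else 0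

theorem isCentRep_centRegRep : IsCentRep r (centRegRep r) := by
  set e := (centFinset r).equivFin.symm
  have he : ∀ a b, (e a : G) = e b ↔ a = b := fun a b =>
    Subtype.ext_iff.symm.trans e.injective.eq_iff
  refine ⟨?_, fun w v hw hv => ?_, fun w hw => ?_⟩
  · ext a b
    simp [centRegRep, Matrix.one_apply, he, e]
  · ext a b
    simp only [centRegRep, Matrix.mul_apply, Matrix.of_apply, mul_ite, mul_one, mul_zero]
    rw [Finset.sum_ite_coe_equivFin_symm_eq (mul_mem_centFinset (mem_centFinset.mpr hv) (e b).2)]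
    simp [e, mul_assoc]
  · rw [Matrix.mem_unitaryGroup_iff']
    ext a b
    simp only [centRegRep, Matrix.mul_apply, Matrix.star_apply, Matrix.of_apply, mul_ite,
      mul_one, mul_zero]
    rw [Finset.sum_ite_coe_equivFin_symm_eq (mul_mem_centFinset (mem_centFinset.mpr hw) (e b).2)]
    simp [e, Matrix.one_apply, he, eq_comm]

theorem centFourier_centRegRep_apply {f : G → ℂ} {u : G} (hu : u ∈ centFinset r) :
    centFourier r f (centRegRep r) ((centFinset r).equivFin ⟨u, hu⟩)
      ((centFinset r).equivFin ⟨1, one_mem_centFinset⟩) = conj (f u) := by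
  simp [centFourier, centRegRep, Matrix.sum_apply, hu]

variable {ι : Type*} {d : ι → ℕ} {ρ : ∀ i : ι, G → Matrix (Fin (d i)) (Fin (d i)) ℂ}

theorem IsCentClassFun.eq_zero_of_centInner_trace_eq_zero (hirr : ∀ i, IsCentIrrep r (ρ i))
    (hcomplete : ∀ (d' : ℕ) (σ : G → Matrix (Fin d') (Fin d') ℂ),
      IsCentIrrep r σ → ∃ i, RepIsoOn r σ (ρ i))
    {f : G → ℂ} (hf : IsCentClassFun r f)
    (horth : ∀ i, centInner r f (Matrix.trace ∘ ρ i) = 0) :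
    ∀ u ∈ centFinset r, f u = 0 := by
  have hreg := centFourier_eq_zero_of_forall_isCentIrrep f (fun m τ hτ => ?_) _ _
    (isCentRep_centRegRep (r := r))
  · intro u hu
    have h := centFourier_centRegRep_apply (f := f) hu
    rwa [hreg, Matrix.zero_apply, eq_comm, map_eq_zero] at h
  obtain ⟨i, U, V, hUV, -, hτU⟩ := hcomplete m τ hτ
  have h := centFourier_mul_of_intertwines f fun z hz => hτU z (mem_centFinset.mp hz)
  rw [(hirr i).centFourier_eq_zero hf (horth i), Matrix.mul_zero] at h
  rw [← Matrix.mul_one (centFourier r f τ), ← hUV, ← Matrix.mul_assoc, h, Matrix.zero_mul]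

end Completeness

section Orthogonality

variable {G : Type*} [Group G] [Fintype G] {r : G} {ι : Type*} [Fintype ι] {d : ι → ℕ}
  {ρ : ∀ i : ι, G → Matrix (Fin (d i)) (Fin (d i)) ℂ}

theorem IsCentClassFun.eq_sum_centInner_mul_trace (hirr : ∀ i, IsCentIrrep r (ρ i))
    (hdistinct : ∀ i j, i ≠ j → ¬ RepIsoOn r (ρ i) (ρ j))
    (hcomplete : ∀ (d' : ℕ) (σ : G → Matrix (Fin d') (Fin d') ℂ),
      IsCentIrrep r σ → ∃ i, RepIsoOn r σ (ρ i))
    {f : G → ℂ} (hf : IsCentClassFun r f) {u : G} (hu : u ∈ centFinset r) :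
    f u = ((centFinset r).card : ℂ)⁻¹
      * ∑ i, centInner r f (Matrix.trace ∘ ρ i) * (ρ i u).trace := by
  set c : ι → ℂ := fun i =>
    ((centFinset r).card : ℂ)⁻¹ * centInner r f (Matrix.trace ∘ ρ i)
  set g : G → ℂ := fun u => f u - ∑ i, c i * (ρ i u).trace
  have hg : IsCentClassFun r g := fun w hw z hz => by
    simp only [g, hf w hw z hz, (hirr _).1.trace_conj hw hz]
  have horth : ∀ j, centInner r g (Matrix.trace ∘ ρ j) = 0 := by
    intro j
    have hexp : centInner r g (Matrix.trace ∘ ρ j) = centInner r f (Matrix.trace ∘ ρ j)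
        - ∑ i, c i * centInner r (Matrix.trace ∘ ρ i) (Matrix.trace ∘ ρ j) := by
      simp only [centInner, g, sub_mul, Finset.sum_sub_distrib, Finset.sum_mul, Finset.mul_sum,
        Function.comp_apply, mul_assoc]
      rw [Finset.sum_comm]
    rw [hexp, Finset.sum_eq_single j (fun i _ hij => by
      rw [centInner_trace_eq_zero (hirr i) (hirr j) (hdistinct i j hij), mul_zero]) (by simp)]
    rcases eq_or_ne (d j) 0 with hdj | hdj
    · simp [centInner, Matrix.trace_of_dim_eq_zero hdj]
    · rw [centInner_trace_self (hirr j) hdj, mul_right_comm,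
        inv_mul_cancel₀ card_centFinset_ne_zero, one_mul, sub_self]
  have h := hg.eq_zero_of_centInner_trace_eq_zero hirr hcomplete horth u hu
  rw [sub_eq_zero] at h
  simp only [h, c, Finset.mul_sum, mul_assoc]

theorem sum_trace_mul_conj_trace (hirr : ∀ i, IsCentIrrep r (ρ i))
    (hdistinct : ∀ i j, i ≠ j → ¬ RepIsoOn r (ρ i) (ρ j))
    (hcomplete : ∀ (d' : ℕ) (σ : G → Matrix (Fin d') (Fin d') ℂ),
      IsCentIrrep r σ → ∃ i, RepIsoOn r σ (ρ i))
    {x z : G} (hx : x ∈ centFinset r) (hz : z ∈ centFinset r) :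
    ∑ i, (ρ i x).trace * conj (ρ i z).trace
      = if z ∈ conjClassIn r x then
          ((centFinset r).card : ℂ) / (conjClassIn r x).card else 0 := by
  set D := conjClassIn r x
  have hD : IsCentClassFun r fun u => if u ∈ D then 1 else 0 := fun w hw u _ => by
    simp only [D, conj_mem_conjClassIn_iff hw]
  have hinner : ∀ i, centInner r (fun u => if u ∈ D then 1 else 0) (Matrix.trace ∘ ρ i)
      = D.card * conj (ρ i x).trace := by
    intro i
    simp only [centInner, ite_mul, one_mul, zero_mul, Function.comp_apply]
    rw [Finset.sum_ite_mem, Finset.inter_eq_right.mpr (conjClassIn_subset_centFinset hx : D ⊆ _),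
      Finset.sum_congr rfl fun u hu => by rw [(hirr i).1.trace_eq_of_mem_conjClassIn hx hu],
      Finset.sum_const, nsmul_eq_mul]
  have hexp := hD.eq_sum_centInner_mul_trace hirr hdistinct hcomplete hz
  simp only [hinner, mul_assoc, ← Finset.mul_sum] at hexp
  have hDne : (D.card : ℂ) ≠ 0 := by
    exact_mod_cast (Finset.card_pos.mpr ⟨x, self_mem_conjClassIn x⟩).ne'
  have hS : ∑ i, conj (ρ i x).trace * (ρ i z).trace
      = if z ∈ D then ((centFinset r).card : ℂ) / D.card else 0 := by
    rw [eq_comm, inv_mul_eq_iff_eq_mul₀ card_centFinset_ne_zero] at hexp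
    split_ifs at hexp ⊢
    · rw [eq_div_iff hDne, mul_comm, hexp, mul_one]
    · simpa [hDne] using hexp.symm
  calc ∑ i, (ρ i x).trace * conj (ρ i z).trace
      = conj (∑ i, conj (ρ i x).trace * (ρ i z).trace) := by simp [map_sum]
    _ = _ := by rw [hS]; split_ifs <;> simp

end Orthogonality

theorem trace_div_smul_Ptr {G : Type*} [Group G] [Fintype G] (r : G) (p : G → G) {n : ℕ}
    (σ : G → Matrix (Fin n) (Fin n) ℂ) (x : G) :
    ((σ x).trace / n) • Ptr r p σ
      = ∑ c ∈ conjClass r, ∑ z ∈ centFinset r,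
          (((conjClass r).card / Fintype.card G : ℂ) * ((σ x).trace * conj (σ z).trace))
            • Fgh c (p c * z * (p c)⁻¹) := by
  have hcoef : (σ x).trace / n * ((conjClass r).card * n / Fintype.card G)
      = (conjClass r).card / Fintype.card G * (σ x).trace := by
    rcases eq_or_ne n 0 with hn | hn
    · simp [Matrix.trace_of_dim_eq_zero hn]
    · field_simp
  rw [Ptr, smul_smul, hcoef]
  simp only [Finset.smul_sum, smul_smul, mul_assoc]

theorem class_sum_expansion_in_probing_general (G : Type*) [Group G] [Fintype G]
    (r : G) (p : G → G)
    (d₀ : G) (hd₀ : d₀ * r = r * d₀)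
    -- a complete set of pairwise non-isomorphic irreducible unitary representations of Z(r)
    (ι : Type) [Fintype ι]
    (d : ι → ℕ)
    (ρ : ∀ i : ι, G → Matrix (Fin (d i)) (Fin (d i)) ℂ)
    (hirr : ∀ i : ι, IsCentIrrep r (ρ i))
    (hdistinct : ∀ i j : ι, i ≠ j → ¬ RepIsoOn r (ρ i) (ρ j))
    (hcomplete : ∀ (d' : ℕ) (σ : G → Matrix (Fin d') (Fin d') ℂ),
      IsCentIrrep r σ → ∃ i : ι, RepIsoOn r σ (ρ i)) :
    ((((conjClass r).card : ℂ) * ((centFinset r).card : ℂ)) /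
        ((Fintype.card G : ℂ) * ((conjClassIn r d₀).card : ℂ))) •
      ∑ c ∈ conjClass r, ∑ k ∈ conjClassIn r d₀, Fgh c (p c * k * (p c)⁻¹)
    = ∑ i : ι, (((ρ i d₀).trace) / ((d i : ℕ) : ℂ)) • Ptr r p (ρ i) := by
  have hd₀' : d₀ ∈ centFinset r := mem_centFinset.mpr hd₀
  set κ : ℂ := (conjClass r).card / Fintype.card G
  calc _ = ∑ c ∈ conjClass r, ∑ z ∈ centFinset r,
          (κ * if z ∈ conjClassIn r d₀ then
              ((centFinset r).card : ℂ) / (conjClassIn r d₀).card else 0)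
            • Fgh c (p c * z * (p c)⁻¹) := by
        simp only [mul_ite, mul_zero, ite_smul, zero_smul, Finset.smul_sum]
        refine Finset.sum_congr rfl fun c _ => ?_
        rw [Finset.sum_ite_mem, Finset.inter_eq_right.mpr (conjClassIn_subset_centFinset hd₀')]
        congr! 2
        ring
    _ = ∑ c ∈ conjClass r, ∑ z ∈ centFinset r,
          (κ * ∑ i, (ρ i d₀).trace * conj (ρ i z).trace)
            • Fgh c (p c * z * (p c)⁻¹) := by
        refine Finset.sum_congr rfl fun c _ => Finset.sum_congr rfl fun z hz => ?_
        rw [sum_trace_mul_conj_trace hirr hdistinct hcomplete hd₀' hz]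
    _ = _ := by
        simp only [trace_div_smul_Ptr, Finset.mul_sum, Finset.sum_smul]
        exact (Finset.sum_congr rfl fun c _ => Finset.sum_comm).trans Finset.sum_comm

theorem class_sum_expansion_in_probing (G : Type*) [Group G] [Fintype G]
    (r : G) (p : G → G) (hp : ∀ c ∈ conjClass r, p c * r * (p c)⁻¹ = c)
    (d₀ : G) (hd₀ : d₀ * r = r * d₀)
    -- a complete set of pairwise non-isomorphic irreducible unitary representations of Z(r)
    (ι : Type) [Fintype ι]
    (d : ι → ℕ)
    (ρ : ∀ i : ι, G → Matrix (Fin (d i)) (Fin (d i)) ℂ)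
    (hirr : ∀ i : ι, IsCentIrrep r (ρ i))
    (hdistinct : ∀ i j : ι, i ≠ j → ¬ RepIsoOn r (ρ i) (ρ j))
    (hcomplete : ∀ (d' : ℕ) (σ : G → Matrix (Fin d') (Fin d') ℂ),
      IsCentIrrep r σ → ∃ i : ι, RepIsoOn r σ (ρ i)) :
    ((((conjClass r).card : ℂ) * ((centFinset r).card : ℂ)) /
        ((Fintype.card G : ℂ) * ((conjClassIn r d₀).card : ℂ))) •
      ∑ c ∈ conjClass r, ∑ k ∈ conjClassIn r d₀, Fgh c (p c * k * (p c)⁻¹)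
    = ∑ i : ι, (((ρ i d₀).trace) / ((d i : ℕ) : ℂ)) • Ptr r p (ρ i) :=
  class_sum_expansion_in_probing_general G r p d₀ hd₀ ι d ρ hirr hdistinct hcomplete

end
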